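/- Let G be an abelian group and UT_n carry the elementary G-grading given by γ = (h₁,…,h_n) with deg e_{ij} = h_i h_j⁻¹. Then UT_n admits a degree-inverting involution if and only if h₁h_n⁻¹ = h₂h_{n−1}⁻¹ = ⋯ = h_n h₁⁻¹. -/

import Mathlib

set_option synthInstance.maxHeartbeats 400000

open Matrix

/-- The algebra `UT_n` of upper triangular `n × n` matrices over `F`. -/
def UTn (n : ℕ) (F : Type*) [Field F] : Subalgebra F (Matrix (Fin n) (Fin n) F) where
  carrier := {M | M.BlockTriangular id}
  mul_mem' := fun ha hb => ha.mul hb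
  one_mem' := Matrix.blockTriangular_one
  add_mem' := fun ha hb => ha.add hb
  zero_mem' := Matrix.blockTriangular_zero
  algebraMap_mem' := fun r => by
    simpa [Matrix.algebraMap_eq_diagonal] using
      Matrix.blockTriangular_diagonal (b := id) (algebraMap F (Fin n → F) r)

/-- The homogeneous component of degree `g` of `UT_n` for the elementary grading given by
`γ = (h₁,…,h_n)`, `deg e_{ij} = h_i h_j⁻¹` (`0`-based indexing): those upper triangular
matrices all of whose nonzero entries sit in positions of degree `g`. -/
def utComponent' {G : Type*} [CommGroup G] (n : ℕ) {F : Type*} [Field F]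
    (γ : ℕ → G) (g : G) : Set (UTn n F) :=
  {M | ∀ i j : Fin n, (M : Matrix (Fin n) (Fin n) F) i j ≠ 0 → γ i * (γ j)⁻¹ = g}

/-! Strictly upper triangular matrices are exactly the nilpotent elements of `UT_n`, so an
anti-automorphism `ρ` preserves them. Writing `e_{ij}` as a product of `j - i` units one
superdiagonal apart then shows that `ρ(e_{ij})` vanishes below the `(j - i)`-th superdiagonal.
Hence in `ρ(e_{0,n-1}) = ρ(e_{i,n-1}) ρ(e_{0,i})` the corner entry, nonzero because `ρ` is
injective, is a single product, so the entry `(n-1-i, n-1)` of `ρ(e_{0,i})` is nonzero;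
degree inversion then gives `h_{n-1-i} h_{n-1}⁻¹ = h_i h_0⁻¹`. Conversely, when `h_i h_{n-1-i}⁻¹`
is constant, the transpose along the antidiagonal is a degree-inverting involution. -/

namespace Matrix

section UpperFrom

variable {R : Type*} {n : ℕ}

def IsUpperFrom [Zero R] (m : ℕ) (A : Matrix (Fin n) (Fin n) R) : Prop :=
  ∀ i j : Fin n, A i j ≠ 0 → (i : ℕ) + m ≤ j

theorem IsUpperTriangular.isUpperFrom_zero [Zero R] {A : Matrix (Fin n) (Fin n) R}
    (hA : A.IsUpperTriangular) : A.IsUpperFrom 0 := fun i j hij => by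
  by_contra h
  exact hij (hA (show j < i from Fin.lt_def.mpr (by omega)))

theorem IsUpperFrom.eq_zero_of_le [Zero R] {m : ℕ} {A : Matrix (Fin n) (Fin n) R}
    (hA : A.IsUpperFrom m) (hm : n ≤ m) : A = 0 := by
  ext i j
  by_contra h
  have := hA i j h
  omega

theorem isUpperFrom_single [Zero R] {i j : Fin n} {m : ℕ} (h : (i : ℕ) + m ≤ j) (c : R) :
    (single i j c).IsUpperFrom m := by
  intro a b hab
  by_contra hlt
  exact hab (single_apply_of_ne _ _ _ _ _ (by rintro ⟨rfl, rfl⟩; exact hlt h))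

variable [NonUnitalNonAssocSemiring R]

theorem IsUpperFrom.mul {m₁ m₂ : ℕ} {A B : Matrix (Fin n) (Fin n) R}
    (hA : A.IsUpperFrom m₁) (hB : B.IsUpperFrom m₂) : (A * B).IsUpperFrom (m₁ + m₂) := by
  intro i k hik
  rw [mul_apply] at hik
  obtain ⟨j, -, hj⟩ := Finset.exists_ne_zero_of_sum_ne_zero hik
  have := hA i j (left_ne_zero_of_mul hj)
  have := hB j k (right_ne_zero_of_mul hj)
  omega

theorem IsUpperFrom.mul_apply_of_add_eq {m₁ m₂ : ℕ} {A B : Matrix (Fin n) (Fin n) R}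
    (hA : A.IsUpperFrom m₁) (hB : B.IsUpperFrom m₂) {i j k : Fin n}
    (hij : (i : ℕ) + m₁ = j) (hjk : (j : ℕ) + m₂ = k) : (A * B) i k = A i j * B j k := by
  rw [mul_apply]
  refine Finset.sum_eq_single j (fun l _ hl => ?_) (by simp)
  by_contra h
  have := hA i l (left_ne_zero_of_mul h)
  have := hB l k (right_ne_zero_of_mul h)
  exact hl (Fin.ext (by omega))

theorem IsUpperFrom.apply_zero_rev_zero_ne_zero [NeZero n] {A : Matrix (Fin n) (Fin n) R}
    (hA : A.IsUpperFrom (n - 1)) (hA0 : A ≠ 0) : A 0 (Fin.rev 0) ≠ 0 := by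
  contrapose! hA0
  ext i j
  by_contra hij
  have := hA i j hij
  have := j.isLt
  obtain ⟨rfl, rfl⟩ : i = 0 ∧ j = Fin.rev 0 :=
    ⟨Fin.ext (by rw [Fin.val_zero]; omega), Fin.ext (by rw [Fin.val_rev, Fin.val_zero]; omega)⟩
  exact hij hA0

end UpperFrom

section Triangular

variable {R : Type*}

theorem IsUpperTriangular.mul_apply_self {m : Type*} [LinearOrder m] [Fintype m]
    [NonUnitalNonAssocSemiring R] {A B : Matrix m m R} (hA : A.IsUpperTriangular)
    (hB : B.IsUpperTriangular) (a : m) : (A * B) a a = A a a * B a a := by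
  rw [mul_apply]
  refine Finset.sum_eq_single a (fun c _ hc => ?_) (by simp)
  rcases hc.lt_or_gt with h | h
  · rw [hA h, zero_mul]
  · rw [hB h, mul_zero]

theorem IsUpperTriangular.pow_apply_self {m : Type*} [LinearOrder m] [Fintype m] [Semiring R]
    {A : Matrix m m R} (hA : A.IsUpperTriangular) (k : ℕ) (a : m) :
    (A ^ k) a a = A a a ^ k := by
  induction k with
  | zero => simp
  | succ k ih => rw [pow_succ, IsUpperTriangular.mul_apply_self (hA.pow k) hA, ih, pow_succ]

variable {n : ℕ} [Semiring R]

theorem IsUpperFrom.isNilpotent {A : Matrix (Fin n) (Fin n) R} (hA : A.IsUpperFrom 1) :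
    IsNilpotent A := by
  have hpow : ∀ k, (A ^ k).IsUpperFrom k := by
    intro k
    induction k with
    | zero => exact IsUpperTriangular.isUpperFrom_zero blockTriangular_one
    | succ k ih => rw [pow_succ]; exact ih.mul hA
  exact ⟨n, (hpow n).eq_zero_of_le le_rfl⟩

theorem IsUpperTriangular.isUpperFrom_one_of_isNilpotent [IsReduced R]
    {A : Matrix (Fin n) (Fin n) R} (hA : A.IsUpperTriangular) (hnil : IsNilpotent A) :
    A.IsUpperFrom 1 := by
  obtain ⟨k, hk⟩ := hnil
  have hdiag (a : Fin n) : A a a = 0 :=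
    IsNilpotent.eq_zero ⟨k, by rw [← hA.pow_apply_self, hk, zero_apply]⟩
  intro i j hij
  have := hA.isUpperFrom_zero i j hij
  have : (i : ℕ) ≠ j := fun h => hij (Fin.ext h ▸ hdiag i)
  omega

end Triangular

section Antitranspose

variable {R : Type*} {n : ℕ}

def antitranspose (A : Matrix (Fin n) (Fin n) R) : Matrix (Fin n) (Fin n) R :=
  of fun i j => A j.rev i.rev

@[simp]
theorem antitranspose_apply (A : Matrix (Fin n) (Fin n) R) (i j : Fin n) :
    A.antitranspose i j = A j.rev i.rev := rfl

@[simp]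
theorem antitranspose_antitranspose (A : Matrix (Fin n) (Fin n) R) :
    A.antitranspose.antitranspose = A := by
  ext i j
  simp

theorem antitranspose_mul [CommSemiring R] (A B : Matrix (Fin n) (Fin n) R) :
    (A * B).antitranspose = B.antitranspose * A.antitranspose := by
  ext i j
  simp only [antitranspose_apply, mul_apply]
  exact Fintype.sum_equiv Fin.revPerm _ _ fun k => by simp [mul_comm]

theorem IsUpperTriangular.antitranspose [Zero R] {A : Matrix (Fin n) (Fin n) R}
    (hA : A.IsUpperTriangular) : A.antitranspose.IsUpperTriangular :=
  fun _ _ h => hA (Fin.rev_lt_rev.mpr h)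

end Antitranspose

end Matrix

theorem IsNilpotent.map_of_map_mul_rev {M N : Type*} [MonoidWithZero M] [MonoidWithZero N]
    {f : M → N} (hf0 : f 0 = 0) (hf : ∀ x y, f (x * y) = f y * f x) {x : M}
    (hx : IsNilpotent x) : IsNilpotent (f x) := by
  obtain ⟨k, hk⟩ := hx
  have hpow (m : ℕ) : f (x ^ (m + 1)) = f x ^ (m + 1) := by
    induction m with
    | zero => simp
    | succ m ih => rw [_root_.pow_succ, hf, ih, ← _root_.pow_succ']
  exact ⟨k + 1, by rw [← hpow, _root_.pow_succ, hk, zero_mul, hf0]⟩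

theorem Fin.val_rev_eq_sub_one_sub {n : ℕ} (i : Fin n) : (i.rev : ℕ) = n - 1 - i := by
  rw [Fin.val_rev]
  omega

namespace UTn

variable {F : Type*} [Field F] {n : ℕ}

theorem isUpperTriangular (x : UTn n F) : (x : Matrix (Fin n) (Fin n) F).IsUpperTriangular :=
  x.2

def single (i j : Fin n) (h : i ≤ j) : UTn n F :=
  ⟨Matrix.single i j 1, fun a b hb =>
    Matrix.single_apply_of_ne _ _ _ _ _ (by rintro ⟨rfl, rfl⟩; exact absurd hb (not_lt.mpr h))⟩

@[simp]
theorem coe_single (i j : Fin n) (h : i ≤ j) :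
    ((UTn.single i j h : UTn n F) : Matrix (Fin n) (Fin n) F) = Matrix.single i j 1 := rfl

theorem single_mul_single {i j k : Fin n} (hij : i ≤ j) (hjk : j ≤ k) :
    (UTn.single i j hij * UTn.single j k hjk : UTn n F) = UTn.single i k (hij.trans hjk) :=
  Subtype.ext <| by
    simp only [MulMemClass.coe_mul, coe_single, Matrix.single_mul_single_same, mul_one]

theorem single_ne_zero {i j : Fin n} (h : i ≤ j) : (UTn.single i j h : UTn n F) ≠ 0 := by
  intro h0
  simpa using congr_arg (fun x : UTn n F => (x : Matrix (Fin n) (Fin n) F) i j) h0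

theorem single_mem_utComponent' {G : Type*} [CommGroup G] (γ : ℕ → G) {i j : Fin n}
    (h : i ≤ j) : (UTn.single i j h : UTn n F) ∈ utComponent' n γ (γ i * (γ j)⁻¹) := by
  intro a b hab
  rw [coe_single] at hab
  obtain ⟨rfl, rfl⟩ : i = a ∧ j = b := by
    by_contra hne
    exact hab (Matrix.single_apply_of_ne _ _ _ _ _ hne)
  rfl

def IsDegInverting {G : Type*} [CommGroup G] (γ : ℕ → G) (ρ : UTn n F → UTn n F) : Prop :=
  ∀ (g : G) (M : UTn n F), M ∈ utComponent' n γ g → ρ M ∈ utComponent' n γ g⁻¹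

section AntiAutomorphism

variable (ρ : UTn n F ≃ₗ[F] UTn n F)

theorem isUpperFrom_one_map (hρ : ∀ x y, ρ (x * y) = ρ y * ρ x) {x : UTn n F}
    (hx : (x : Matrix (Fin n) (Fin n) F).IsUpperFrom 1) :
    (ρ x : Matrix (Fin n) (Fin n) F).IsUpperFrom 1 := by
  have hnil : IsNilpotent x :=
    (IsNilpotent.map_iff (f := (UTn n F).val) Subtype.val_injective).1 hx.isNilpotent
  exact (isUpperTriangular (ρ x)).isUpperFrom_one_of_isNilpotent
    ((hnil.map_of_map_mul_rev (map_zero ρ) hρ).map (UTn n F).val)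

theorem isUpperFrom_map_single (hρ : ∀ x y, ρ (x * y) = ρ y * ρ x) {i j : Fin n}
    (h : i ≤ j) :
    (ρ (UTn.single i j h) : Matrix (Fin n) (Fin n) F).IsUpperFrom ((j : ℕ) - i) := by
  obtain ⟨d, hd⟩ : ∃ d, (j : ℕ) = i + d := ⟨j - i, by omega⟩
  rw [show (j : ℕ) - i = d by omega]
  induction d generalizing j with
  | zero => exact (isUpperTriangular (ρ _)).isUpperFrom_zero
  | succ d ih =>
    let k : Fin n := ⟨i + d, by omega⟩
    have hik : i ≤ k := Fin.le_def.mpr (Nat.le_add_right _ _)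
    have hkj : k ≤ j := Fin.le_def.mpr (show (i : ℕ) + d ≤ j by omega)
    rw [← single_mul_single hik hkj, hρ, MulMemClass.coe_mul, add_comm]
    have hkj' : (k : ℕ) + 1 ≤ j := by simp only [k]; omega
    exact (isUpperFrom_one_map ρ hρ (Matrix.isUpperFrom_single hkj' 1)).mul (ih hik rfl)

theorem map_single_zero_apply_rev_rev_zero_ne_zero [NeZero n]
    (hρ : ∀ x y, ρ (x * y) = ρ y * ρ x) (i : Fin n) :
    (ρ (UTn.single 0 i (Fin.zero_le i)) : Matrix (Fin n) (Fin n) F) i.rev (Fin.rev 0) ≠ 0 := by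
  have hi : i ≤ Fin.rev 0 := Fin.le_def.mpr (by rw [Fin.val_rev, Fin.val_zero]; omega)
  have hcorner :=
    (isUpperFrom_map_single ρ hρ (Fin.zero_le (Fin.rev 0))).apply_zero_rev_zero_ne_zero
      (ZeroMemClass.coe_eq_zero.not.mpr ((map_ne_zero_iff ρ ρ.injective).mpr (single_ne_zero _)))
  rw [← single_mul_single (Fin.zero_le i) hi, hρ, MulMemClass.coe_mul,
    (isUpperFrom_map_single ρ hρ hi).mul_apply_of_add_eq (isUpperFrom_map_single ρ hρ _)
      (j := i.rev) (by simp only [Fin.val_rev, Fin.val_zero]; omega)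
      (by simp only [Fin.val_rev, Fin.val_zero]; omega)] at hcorner
  exact right_ne_zero_of_mul hcorner

theorem mul_inv_rev_eq_of_isDegInverting {G : Type*} [CommGroup G] {γ : ℕ → G}
    (hρ : ∀ x y, ρ (x * y) = ρ y * ρ x) (hdeg : IsDegInverting γ ρ) (i j : Fin n) :
    γ i * (γ i.rev)⁻¹ = γ j * (γ j.rev)⁻¹ := by
  have : NeZero n := ⟨i.pos.ne'⟩
  suffices h : ∀ i : Fin n, γ i * (γ i.rev)⁻¹ = γ 0 * (γ (Fin.rev 0 : Fin n))⁻¹ from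
    (h i).trans (h j).symm
  intro i
  have hdeg_i := hdeg _ _ (single_mem_utComponent' γ (Fin.zero_le i)) i.rev (Fin.rev 0)
    (map_single_zero_apply_rev_rev_zero_ne_zero ρ hρ i)
  rw [_root_.mul_inv_rev, inv_inv] at hdeg_i
  simp only [← div_eq_mul_inv] at hdeg_i ⊢
  exact div_eq_div_iff_div_eq_div.mpr hdeg_i.symm

end AntiAutomorphism

def antitranspose (n : ℕ) (F : Type*) [Field F] : UTn n F ≃ₗ[F] UTn n F :=
  LinearEquiv.ofInvolutive
    { toFun x :=
        ⟨(x : Matrix (Fin n) (Fin n) F).antitranspose, (isUpperTriangular x).antitranspose⟩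
      map_add' _ _ := Subtype.ext (by ext; simp)
      map_smul' _ _ := Subtype.ext (by ext; simp) }
    fun x => Subtype.ext (Matrix.antitranspose_antitranspose _)

@[simp]
theorem coe_antitranspose (x : UTn n F) :
    (antitranspose n F x : Matrix (Fin n) (Fin n) F) =
      (x : Matrix (Fin n) (Fin n) F).antitranspose :=
  rfl

theorem antitranspose_mul (x y : UTn n F) :
    antitranspose n F (x * y) = antitranspose n F y * antitranspose n F x :=
  Subtype.ext (by simp [Matrix.antitranspose_mul])

theorem antitranspose_antitranspose (x : UTn n F) :
    antitranspose n F (antitranspose n F x) = x :=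
  Subtype.ext (by simp)

theorem isDegInverting_antitranspose {G : Type*} [CommGroup G] {γ : ℕ → G}
    (hγ : ∀ i j : Fin n, γ i * (γ i.rev)⁻¹ = γ j * (γ j.rev)⁻¹) :
    IsDegInverting γ (antitranspose n F) := by
  intro g M hM i j hij
  rw [← hM j.rev i.rev hij, _root_.mul_inv_rev, inv_inv]
  simp only [← div_eq_mul_inv] at hγ ⊢
  exact div_eq_div_iff_div_eq_div.mpr (hγ i j)

end UTn

theorem UTn_exists_degInvInvolution_iff_abelian_general
    {F : Type*} [Field F]
    {G : Type*} [CommGroup G] (n : ℕ) (γ : ℕ → G) :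
    (∃ ρ : (UTn n F) ≃ₗ[F] (UTn n F),
        (∀ x y : UTn n F, ρ (x * y) = ρ y * ρ x) ∧
        (∀ x : UTn n F, ρ (ρ x) = x) ∧
        (∀ (g : G) (M : UTn n F), M ∈ utComponent' n γ g →
          ρ M ∈ utComponent' n γ g⁻¹)) ↔
    (∀ i j : ℕ, i < n → j < n →
      γ i * (γ (n - 1 - i))⁻¹ = γ j * (γ (n - 1 - j))⁻¹) := by
  constructor
  · rintro ⟨ρ, hρ, -, hdeg⟩ i j hi hj
    simpa only [Fin.val_rev_eq_sub_one_sub] using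
      UTn.mul_inv_rev_eq_of_isDegInverting ρ hρ hdeg ⟨i, hi⟩ ⟨j, hj⟩
  · intro hγ
    refine ⟨UTn.antitranspose n F, UTn.antitranspose_mul, UTn.antitranspose_antitranspose,
      UTn.isDegInverting_antitranspose fun i j => ?_⟩
    simpa only [Fin.val_rev_eq_sub_one_sub] using hγ i j i.2 j.2

/-- Let `G` be abelian and `UT_n` carry the elementary `G`-grading given by
`γ = (h₁,…,h_n)`, `deg e_{ij} = h_i h_j⁻¹`.  Then `UT_n` admits a degree-inverting
involution if and only if `h₁h_n⁻¹ = h₂h_{n−1}⁻¹ = ⋯ = h_n h₁⁻¹` (in `0`-based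
indexing: `h_i h_{n−1−i}⁻¹` is the same for all `i < n`). -/
theorem UTn_exists_degInvInvolution_iff_abelian
    {F : Type*} [Field F] (hchar : (2 : F) ≠ 0)
    {G : Type*} [CommGroup G] (n : ℕ) (γ : ℕ → G) :
    (∃ ρ : (UTn n F) ≃ₗ[F] (UTn n F),
        (∀ x y : UTn n F, ρ (x * y) = ρ y * ρ x) ∧
        (∀ x : UTn n F, ρ (ρ x) = x) ∧
        (∀ (g : G) (M : UTn n F), M ∈ utComponent' n γ g →
          ρ M ∈ utComponent' n γ g⁻¹)) ↔
    (∀ i j : ℕ, i < n → j < n →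
      γ i * (γ (n - 1 - i))⁻¹ = γ j * (γ (n - 1 - j))⁻¹) :=
  UTn_exists_degInvInvolution_iff_abelian_general n γ
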